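/- For every matrix N ∈ T, ‖P_T(P_{Γ⊥}(N))‖_∞ ≤ α‖N‖_∞, where α = 3(1 − 1/K_1)·D_max + 1/K_p². -/

import Mathlib

open Matrix MeasureTheory

open scoped Classical

/-- Keep the entries of `M` indexed by `S` and zero out the rest. -/
noncomputable def projS {n : ℕ} (S : Set (Fin n × Fin n)) (M : Matrix (Fin n) (Fin n) ℝ) :
    Matrix (Fin n) (Fin n) ℝ :=
  Matrix.of fun i j => if (i, j) ∈ S then M i j else 0

/-- Zero out the entries of `M` indexed by `S` (projection onto the complement). -/
noncomputable def zeroOn {n : ℕ} (S : Set (Fin n × Fin n)) (M : Matrix (Fin n) (Fin n) ℝ) :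
    Matrix (Fin n) (Fin n) ℝ :=
  Matrix.of fun i j => if (i, j) ∈ S then 0 else M i j

/-- Entrywise ℓ₁ norm. -/
noncomputable def l1Norm {n : ℕ} (M : Matrix (Fin n) (Fin n) ℝ) : ℝ := ∑ i, ∑ j, |M i j|

/-- Entrywise ℓ∞ norm (max of absolute values of the entries). -/
noncomputable def linfNorm {n : ℕ} (M : Matrix (Fin n) (Fin n) ℝ) : ℝ :=
  sSup (Set.range fun q : Fin n × Fin n => |M q.1 q.2|)

/-- Frobenius norm. -/
noncomputable def frobNorm {n : ℕ} (M : Matrix (Fin n) (Fin n) ℝ) : ℝ :=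
  Real.sqrt (∑ i, ∑ j, (M i j) ^ 2)

/-- Nuclear norm: the sum of the singular values, i.e. the trace of `√(MᴴM)`. -/
noncomputable def nuclearNorm {n : ℕ} (M : Matrix (Fin n) (Fin n) ℝ) : ℝ :=
  (let hA := Matrix.posSemidef_conjTranspose_mul_self M
   (hA.1.eigenvectorUnitary.1 * Matrix.diagonal ((RCLike.ofReal : ℝ → ℝ) ∘ Real.sqrt ∘ hA.1.eigenvalues) *
    (star hA.1.eigenvectorUnitary : Matrix (Fin n) (Fin n) ℝ))).trace

/-- Spectral norm: the operator norm as a map between Euclidean spaces. -/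
noncomputable def specNorm {m l : Type*} [Fintype m] [Fintype l] [DecidableEq l]
    (M : Matrix m l ℝ) : ℝ :=
  ‖LinearMap.toContinuousLinearMap (Matrix.toEuclideanLin M)‖

/-- Entrywise sign matrix. -/
noncomputable def sgnMat {n : ℕ} (M : Matrix (Fin n) (Fin n) ℝ) : Matrix (Fin n) (Fin n) ℝ :=
  Matrix.of fun i j => Real.sign (M i j)

/-- The support of a matrix, as a set of index pairs. -/
def suppSet {n : ℕ} (M : Matrix (Fin n) (Fin n) ℝ) : Set (Fin n × Fin n) :=
  {q | M q.1 q.2 ≠ 0}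

/-- A matrix is a valid clustering matrix iff for some assignment of nodes to clusters,
`K i j = 1` when `i, j` are in the same cluster and `K i j = 0` otherwise. -/
def IsValidClustering {n : ℕ} (K : Matrix (Fin n) (Fin n) ℝ) : Prop :=
  ∃ f : Fin n → Fin n, ∀ i j, K i j = if f i = f j then 1 else 0

/-- Objective of the convex program CP_η. -/
noncomputable def cpObj {n : ℕ} (η : ℝ) (B K : Matrix (Fin n) (Fin n) ℝ) : ℝ :=
  η * l1Norm B + (1 - η) * nuclearNorm K

/-- Feasibility for the convex program: `P_Ωobs (B + K) = P_Ωobs (I + A)`. -/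
def cpFeasible {n : ℕ} (Obs : Set (Fin n × Fin n)) (A B K : Matrix (Fin n) (Fin n) ℝ) : Prop :=
  projS Obs (B + K) = projS Obs (1 + A)

/-- Number of observed disagreements of the clustering matrix `K` with the observed graph. -/
noncomputable def disagreements {n : ℕ} (Obs : Set (Fin n × Fin n))
    (A K : Matrix (Fin n) (Fin n) ℝ) : ℕ :=
  {q : Fin n × Fin n | q.1 ≠ q.2 ∧ q ∈ Obs ∧ A q.1 q.2 ≠ K q.1 q.2}.ncard

/-- Size of cluster `j` under the assignment `c`. -/
noncomputable def clusterSize {n p : ℕ} (c : Fin n → Fin p) (j : Fin p) : ℕ :=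
  {i : Fin n | c i = j}.ncard

/-- Minimum cluster size. -/
noncomputable def KminVal {n p : ℕ} (c : Fin n → Fin p) : ℕ :=
  sInf (Set.range fun j => clusterSize c j)

/-- The valid clustering matrix associated to the assignment `c`. -/
noncomputable def Kmat {n p : ℕ} (c : Fin n → Fin p) : Matrix (Fin n) (Fin n) ℝ :=
  Matrix.of fun i j => if c i = c j then 1 else 0

/-- The matrix of observed disagreements of the clustering `c`. -/
noncomputable def Bstar {n p : ℕ} (Obs : Set (Fin n × Fin n)) (A : Matrix (Fin n) (Fin n) ℝ)
    (c : Fin n → Fin p) : Matrix (Fin n) (Fin n) ℝ :=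
  projS Obs (A + 1 - Kmat c)

/-- Index set of Γ: observed non-disagreement entries (includes the diagonal). -/
def GammaSet {n p : ℕ} (Obs : Set (Fin n × Fin n)) (A : Matrix (Fin n) (Fin n) ℝ)
    (c : Fin n → Fin p) : Set (Fin n × Fin n) :=
  {q | q ∈ Obs ∧ Bstar Obs A c q.1 q.2 = 0}

/-- The matrix `U` whose `j`-th column is `K_j^{-1/2}` on the indices of cluster `j`. -/
noncomputable def Umat {n p : ℕ} (c : Fin n → Fin p) : Matrix (Fin n) (Fin p) ℝ :=
  Matrix.of fun i j => if c i = j then (Real.sqrt (clusterSize c j))⁻¹ else 0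

/-- The subspace `T = {U Xᵀ + Y Uᵀ}` as a set of matrices. -/
def Tspace {n p : ℕ} (U : Matrix (Fin n) (Fin p) ℝ) : Set (Matrix (Fin n) (Fin n) ℝ) :=
  {M | ∃ X Y : Matrix (Fin n) (Fin p) ℝ, M = U * Xᵀ + Y * Uᵀ}

/-- Orthogonal projection onto `T`. -/
noncomputable def PT {n p : ℕ} (U : Matrix (Fin n) (Fin p) ℝ) (M : Matrix (Fin n) (Fin n) ℝ) :
    Matrix (Fin n) (Fin n) ℝ :=
  U * Uᵀ * M + M * (U * Uᵀ) - U * Uᵀ * M * (U * Uᵀ)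

/-- `d_{i,k}`: number of "bad" (unobserved or disagreeing) entries between node `i`
and cluster `k`. -/
noncomputable def dval {n p : ℕ} (Obs : Set (Fin n × Fin n)) (A : Matrix (Fin n) (Fin n) ℝ)
    (c : Fin n → Fin p) (i : Fin n) (k : Fin p) : ℕ :=
  if k = c i then {j : Fin n | c j = k ∧ ((i, j) ∉ Obs ∨ A i j = 0)}.ncard
  else {j : Fin n | c j = k ∧ ((i, j) ∉ Obs ∨ A i j = 1)}.ncard

/-- `D_max`: the largest fraction of bad entries between a node and a cluster. -/
noncomputable def Dmax {n p : ℕ} (Obs : Set (Fin n × Fin n)) (A : Matrix (Fin n) (Fin n) ℝ)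
    (c : Fin n → Fin p) : ℝ :=
  sSup (Set.range fun q : Fin n × Fin p =>
    (dval Obs A c q.1 q.2 : ℝ) / min (clusterSize c q.2 : ℝ) (clusterSize c (c q.1) : ℝ))

section Helpers

open Finset

variable {n p : ℕ}

lemma clusterSize_sum (c : Fin n → Fin p) (k : Fin p) :
    ((clusterSize c k : ℝ)) = ∑ l, if c l = k then (1:ℝ) else 0 := by
  rw [clusterSize, Set.ncard_eq_toFinset_card', Set.toFinset_setOf, Finset.sum_boole]

lemma one_le_clusterSize (c : Fin n → Fin p) (hc : Function.Surjective c) (k : Fin p) :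
    1 ≤ clusterSize c k := by
  obtain ⟨t, ht⟩ := hc k
  have : (0:ℕ) < clusterSize c k := by
    rw [clusterSize]
    exact Set.ncard_pos (Set.toFinite _) |>.mpr ⟨t, ht⟩
  omega

lemma UUT_apply (c : Fin n → Fin p) (i l : Fin n) :
    (Umat c * (Umat c)ᵀ) i l
      = if c i = c l then ((clusterSize c (c i) : ℝ))⁻¹ else 0 := by
  simp only [Matrix.mul_apply, Matrix.transpose_apply, Umat, Matrix.of_apply]
  rw [Finset.sum_eq_single (c i)]
  · by_cases h : c l = c i
    · simp only [h, if_pos rfl, if_true]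
      rw [← mul_inv, Real.mul_self_sqrt (Nat.cast_nonneg _)]
    · simp [h, Ne.symm h]
  · intro b _ hb
    rw [if_neg fun hh => hb hh.symm, zero_mul]
  · intro h; exact absurd (Finset.mem_univ _) h


lemma Bstar_apply (Obs : Set (Fin n × Fin n)) (A : Matrix (Fin n) (Fin n) ℝ)
    (c : Fin n → Fin p) (l m : Fin n) :
    Bstar Obs A c l m = if (l, m) ∈ Obs then
      A l m + (if l = m then (1:ℝ) else 0) - (if c l = c m then (1:ℝ) else 0) else 0 := by
  simp [Bstar, projS, Kmat, Matrix.add_apply, Matrix.sub_apply, Matrix.one_apply]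

lemma diag_mem_Gamma (Obs : Set (Fin n × Fin n)) (A : Matrix (Fin n) (Fin n) ℝ)
    (c : Fin n → Fin p) (hObsDiag : ∀ i : Fin n, (i, i) ∈ Obs) (hAdiag : ∀ i, A i i = 0)
    (l : Fin n) : (l, l) ∈ GammaSet Obs A c := by
  refine ⟨hObsDiag l, ?_⟩
  rw [Bstar_apply, if_pos (hObsDiag l), if_pos rfl, if_pos rfl, hAdiag]
  ring

lemma Gamma_symm (Obs : Set (Fin n × Fin n)) (A : Matrix (Fin n) (Fin n) ℝ)
    (c : Fin n → Fin p) (hObsSym : ∀ i j : Fin n, (i, j) ∈ Obs → (j, i) ∈ Obs)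
    (hAsym : Aᵀ = A) (l m : Fin n) (h : (l, m) ∈ GammaSet Obs A c) :
    (m, l) ∈ GammaSet Obs A c := by
  obtain ⟨h1, h2⟩ := h
  refine ⟨hObsSym _ _ h1, ?_⟩
  rw [Bstar_apply] at h2 ⊢
  rw [if_pos h1] at h2
  rw [if_pos (hObsSym _ _ h1)]
  have hA : A m l = A l m := by
    conv_lhs => rw [← hAsym]
    rfl
  rw [hA]
  have e1 : (if m = l then (1:ℝ) else 0) = (if l = m then (1:ℝ) else 0) := by
    simp [eq_comm]
  have e2 : (if c m = c l then (1:ℝ) else 0) = (if c l = c m then (1:ℝ) else 0) := by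
    simp [eq_comm]
  rw [e1, e2]
  exact h2

private lemma ite_nonneg01 (P : Prop) [Decidable P] : (0:ℝ) ≤ if P then (1:ℝ) else 0 := by
  split <;> norm_num

/-- row-count (plus diagonal correction) is at most `dval`. -/
lemma row_le_dval (Obs : Set (Fin n × Fin n)) (A : Matrix (Fin n) (Fin n) ℝ)
    (c : Fin n → Fin p)
    (hObsDiag : ∀ i : Fin n, (i, i) ∈ Obs)
    (hA01 : ∀ i j : Fin n, (i, j) ∈ Obs → A i j = 0 ∨ A i j = 1)
    (hAdiag : ∀ i, A i i = 0)
    (l : Fin n) (k : Fin p) :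
    (∑ m, if c m = k then (if (l, m) ∈ GammaSet Obs A c then (0:ℝ) else 1) else 0)
      + (if c l = k then (1:ℝ) else 0) ≤ (dval Obs A c l k : ℝ) := by
  classical
  set COND : Fin n → Prop := fun m => if k = c l then ((l, m) ∉ Obs ∨ A l m = 0)
      else ((l, m) ∉ Obs ∨ A l m = 1) with hCOND
  have hd : (dval Obs A c l k : ℝ) = ∑ m, (if (c m = k ∧ COND m) then (1:ℝ) else 0) := by
    rw [dval]
    by_cases hk : k = c l
    · rw [if_pos hk, Set.ncard_eq_toFinset_card', Set.toFinset_setOf, Finset.sum_boole]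
      norm_num
      congr 1
      apply Finset.filter_congr
      intro m _
      simp [hCOND, hk]
    · rw [if_neg hk, Set.ncard_eq_toFinset_card', Set.toFinset_setOf, Finset.sum_boole]
      norm_num
      congr 1
      apply Finset.filter_congr
      intro m _
      simp [hCOND, hk]
  rw [hd]
  have hsub : (if c l = k then (1:ℝ) else 0)
      = ∑ m, (if m = l ∧ c l = k then (1:ℝ) else 0) := by
    rw [Finset.sum_eq_single l]
    · simp
    · intro b _ hb; simp [hb]
    · intro h; exact absurd (Finset.mem_univ _) h
  rw [hsub, ← Finset.sum_add_distrib]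
  apply Finset.sum_le_sum
  intro m _
  by_cases hcm : c m = k
  · rw [if_pos hcm]
    by_cases hml : m = l
    · subst hml
      rw [if_pos (diag_mem_Gamma Obs A c hObsDiag hAdiag m)]
      have hmem : c m = k ∧ COND m := by
        refine ⟨hcm, ?_⟩
        simp only [hCOND]
        by_cases hk : k = c m
        · rw [if_pos hk]; exact Or.inr (hAdiag m)
        · exact absurd hcm.symm hk
      rw [if_pos hmem, if_pos ⟨rfl, hcm⟩]
      norm_num
    · by_cases hbad : (l, m) ∈ GammaSet Obs A c
      · rw [if_pos hbad, if_neg (fun hh => hml hh.1), add_zero]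
        exact ite_nonneg01 _
      · rw [if_neg hbad, if_neg (fun hh => hml hh.1), add_zero]
        have hmem : COND m := by
          simp only [hCOND]
          by_cases hobs : (l, m) ∈ Obs
          · have hBne : Bstar Obs A c l m ≠ 0 := fun hB0 => hbad ⟨hobs, hB0⟩
            rw [Bstar_apply, if_pos hobs] at hBne
            have hlm : ¬ (l = m) := fun hh => hml hh.symm
            rw [if_neg hlm] at hBne
            by_cases hk : k = c l
            · rw [if_pos hk]
              have hcc : c l = c m := by rw [← hk, hcm]
              rw [if_pos hcc] at hBne
              rcases hA01 l m hobs with h0 | h1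
              · exact Or.inr h0
              · exact absurd (by rw [h1]; ring) hBne
            · rw [if_neg hk]
              have hcc : ¬ (c l = c m) := by rw [hcm]; exact fun hh => hk hh.symm
              rw [if_neg hcc] at hBne
              rcases hA01 l m hobs with h0 | h1
              · exact absurd (by rw [h0]; ring) hBne
              · exact Or.inr h1
          · by_cases hk : k = c l
            · rw [if_pos hk]; exact Or.inl hobs
            · rw [if_neg hk]; exact Or.inl hobs
        rw [if_pos ⟨hcm, hmem⟩]
  · rw [if_neg hcm, if_neg (fun (hh : m = l ∧ c l = k) => hcm (by rw [hh.1, hh.2])),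
      if_neg (fun (hh : c m = k ∧ COND m) => hcm hh.1), add_zero]


lemma dval_le_size (Obs : Set (Fin n × Fin n)) (A : Matrix (Fin n) (Fin n) ℝ)
    (c : Fin n → Fin p) (l : Fin n) (k : Fin p) :
    dval Obs A c l k ≤ clusterSize c k := by
  rw [dval, clusterSize]
  split <;> exact Set.ncard_le_ncard (fun m hm => hm.1) (Set.toFinite _)

lemma dval_le_Dmax (Obs : Set (Fin n × Fin n)) (A : Matrix (Fin n) (Fin n) ℝ)
    (c : Fin n → Fin p) (hc : Function.Surjective c) (l : Fin n) (k : Fin p) :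
    (dval Obs A c l k : ℝ)
      ≤ Dmax Obs A c * min (clusterSize c k : ℝ) (clusterSize c (c l) : ℝ) := by
  have h1 : (1:ℝ) ≤ (clusterSize c k : ℝ) := by
    exact_mod_cast one_le_clusterSize c hc k
  have h2 : (1:ℝ) ≤ (clusterSize c (c l) : ℝ) := by
    exact_mod_cast one_le_clusterSize c hc (c l)
  have hmin : (0:ℝ) < min (clusterSize c k : ℝ) (clusterSize c (c l) : ℝ) :=
    lt_min (by linarith) (by linarith)
  have hb : BddAbove (Set.range fun q : Fin n × Fin p =>
      (dval Obs A c q.1 q.2 : ℝ) / min (clusterSize c q.2 : ℝ) (clusterSize c (c q.1) : ℝ)) :=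
    (Set.finite_range _).bddAbove
  have hle := le_csSup hb (Set.mem_range_self (f := fun q : Fin n × Fin p =>
      (dval Obs A c q.1 q.2 : ℝ) / min (clusterSize c q.2 : ℝ) (clusterSize c (c q.1) : ℝ)) (l, k))
  rw [div_le_iff₀ hmin] at hle
  rw [Dmax]
  exact hle

lemma Dmax_nonneg (Obs : Set (Fin n × Fin n)) (A : Matrix (Fin n) (Fin n) ℝ)
    (c : Fin n → Fin p) (hn : 1 ≤ n) : 0 ≤ Dmax Obs A c := by
  have hb : BddAbove (Set.range fun q : Fin n × Fin p =>
      (dval Obs A c q.1 q.2 : ℝ) / min (clusterSize c q.2 : ℝ) (clusterSize c (c q.1) : ℝ)) :=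
    (Set.finite_range _).bddAbove
  set i0 : Fin n := ⟨0, hn⟩
  have hle := le_csSup hb (Set.mem_range_self (f := fun q : Fin n × Fin p =>
      (dval Obs A c q.1 q.2 : ℝ) / min (clusterSize c q.2 : ℝ) (clusterSize c (c q.1) : ℝ))
      (i0, c i0))
  refine le_trans ?_ hle
  positivity

lemma Dmax_le_K1 (Obs : Set (Fin n × Fin n)) (A : Matrix (Fin n) (Fin n) ℝ)
    (c : Fin n → Fin p) (hp : 0 < p) (hc : Function.Surjective c)
    (hmono : Antitone (clusterSize c)) :
    Dmax Obs A c ≤ (clusterSize c ⟨0, hp⟩ : ℝ) := by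
  apply Real.sSup_le
  · rintro x ⟨q, rfl⟩
    have h1 : (1:ℝ) ≤ (clusterSize c q.2 : ℝ) := by
      exact_mod_cast one_le_clusterSize c hc q.2
    have h2 : (1:ℝ) ≤ (clusterSize c (c q.1) : ℝ) := by
      exact_mod_cast one_le_clusterSize c hc (c q.1)
    have hmin : (0:ℝ) < min (clusterSize c q.2 : ℝ) (clusterSize c (c q.1) : ℝ) :=
      lt_min (by linarith) (by linarith)
    rw [div_le_iff₀ hmin]
    have hK : (clusterSize c q.2 : ℝ) ≤ (clusterSize c ⟨0, hp⟩ : ℝ) := by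
      exact_mod_cast hmono (show (⟨0, hp⟩ : Fin p) ≤ q.2 from by simp [Fin.le_def])
    have hK0 : (0:ℝ) ≤ (clusterSize c ⟨0, hp⟩ : ℝ) := Nat.cast_nonneg _
    have hdv : (dval Obs A c q.1 q.2 : ℝ) ≤ (clusterSize c q.2 : ℝ) := by
      exact_mod_cast dval_le_size Obs A c q.1 q.2
    have hm1 : (1:ℝ) ≤ min (clusterSize c q.2 : ℝ) (clusterSize c (c q.1) : ℝ) :=
      le_min h1 h2
    calc (dval Obs A c q.1 q.2 : ℝ) ≤ (clusterSize c ⟨0, hp⟩ : ℝ) := le_trans hdv hK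
      _ = (clusterSize c ⟨0, hp⟩ : ℝ) * 1 := (mul_one _).symm
      _ ≤ _ := mul_le_mul_of_nonneg_left hm1 hK0
  · exact Nat.cast_nonneg _

end Helpers
set_option maxHeartbeats 1600000 in
lemma master_ineq (r s m K1 Kp D d e B β δ : ℝ)
    (h1r : 1 ≤ r) (h1s : 1 ≤ s) (hm : m = min r s)
    (hrK : r ≤ K1) (hsK : s ≤ K1) (hKp1 : 1 ≤ Kp) (hKpr : Kp ≤ r) (hKps : Kp ≤ s)
    (hD0 : 0 ≤ D) (hDK : D ≤ K1)
    (hβ0 : 0 ≤ β) (hβ1 : β ≤ 1) (hβd : β ≤ d) (hβe : β ≤ e)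
    (hdq : d + δ ≤ D * m) (heq : e + δ ≤ D * m)
    (hds : d + δ ≤ s) (hes : e + δ ≤ r)
    (hBde : d + e - β ≤ B) (hBm : B ≤ m * (D * m - δ))
    (hδ : δ = 0 ∨ δ = 1) (hδsame : δ = 1 → r = s)
    (hB1 : 1 ≤ B → 1 + δ ≤ D * m)
    (hB01 : B = 0 ∨ 1 ≤ B)
    (hr12 : r = 1 ∨ 2 ≤ r) (hs12 : s = 1 ∨ 2 ≤ s) :
    (e * (s - 2) + d * (r - 2) + B + 2 * β) / (r * s) ≤
      3 * (1 - 1 / K1) * D + 1 / Kp ^ 2 := by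
  have hK10 : (0:ℝ) < K1 := by linarith
  have hKp0 : (0:ℝ) < Kp := by linarith
  have hr0 : (0:ℝ) < r := by linarith
  have hs0 : (0:ℝ) < s := by linarith
  have hrs0 : (0:ℝ) < r * s := by positivity
  have hδ0 : 0 ≤ δ := by rcases hδ with h | h <;> simp [h]
  have hδ1 : δ ≤ 1 := by rcases hδ with h | h <;> simp [h]
  have hmr : m ≤ r := by rw [hm]; exact min_le_left r s
  have hms : m ≤ s := by rw [hm]; exact min_le_right r s
  have hm1 : 1 ≤ m := by rw [hm]; exact le_min h1r h1s
  have hm0 : (0:ℝ) ≤ m := by linarith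
  have hK1inv : 1 / K1 ≤ 1 := by rw [div_le_one hK10]; linarith
  rcases hB01 with hB | hB
  · -- B = 0 : everything zero
    have hd0 : d = 0 := le_antisymm (by linarith) (by linarith)
    have he0 : e = 0 := le_antisymm (by linarith) (by linarith)
    have hβz : β = 0 := le_antisymm (by linarith) hβ0
    rw [hB, hd0, he0, hβz]
    simp only [zero_mul, mul_zero, add_zero, zero_add, zero_div]
    have h2 : 0 ≤ 3 * (1 - 1 / K1) * D := mul_nonneg (by linarith) hD0
    have h3 : 0 < 1 / Kp ^ 2 := by positivity
    linarith
  · have hq := hB1 hB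
    have hdq' : d ≤ D * m - δ := by linarith
    have heq' : e ≤ D * m - δ := by linarith
    have hKprs : 1 / (r * s) ≤ 1 / Kp ^ 2 := by
      apply one_div_le_one_div_of_le (by positivity)
      calc Kp ^ 2 = Kp * Kp := sq Kp
        _ ≤ r * s := mul_le_mul hKpr hKps (le_of_lt hKp0) (le_of_lt hr0)
    suffices h : e * (s - 2) + d * (r - 2) + B + 2 * β - 1 ≤ 3 * (1 - 1 / K1) * D * (r * s) by
      have step : (e * (s - 2) + d * (r - 2) + B + 2 * β) / (r * s) ≤
          3 * (1 - 1 / K1) * D + 1 / (r * s) := by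
        rw [div_le_iff₀ hrs0]
        have hexp : (3 * (1 - 1 / K1) * D + 1 / (r * s)) * (r * s)
            = 3 * (1 - 1 / K1) * D * (r * s) + 1 := by
          field_simp
        rw [hexp]; linarith
      linarith
    -- key: rs ≤ m * K1
    have hrsK : r * s ≤ m * K1 := by
      rcases min_cases r s with ⟨h1, h2⟩ | ⟨h1, h2⟩
      · rw [hm, h1]; exact mul_le_mul_of_nonneg_left hsK (le_of_lt hr0)
      · rw [hm, h1]
        calc r * s = s * r := mul_comm r s
          _ ≤ s * K1 := mul_le_mul_of_nonneg_left hrK (by linarith)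
    have hYred : 3 * D * (r * s) - 3 * (D * m) ≤ 3 * (1 - 1 / K1) * D * (r * s) := by
      have h1 : D * (r * s) * (1 / K1) ≤ D * m := by
        calc D * (r * s) * (1 / K1) = D * ((r * s) * (1/K1)) := by ring
          _ ≤ D * m := by
            apply mul_le_mul_of_nonneg_left ?_ hD0
            rw [mul_one_div, div_le_iff₀ hK10]; linarith
      have h2 : 3 * (1 - 1 / K1) * D * (r * s)
          = 3 * D * (r * s) - 3 * (D * (r * s) * (1 / K1)) := by ring
      rw [h2]; linarith
    rcases hr12 with hr1 | hr2
    · rcases hs12 with hs1 | hs2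
      · -- r = s = 1
        have hmm : m = 1 := by rw [hm, hr1, hs1]; simp
        rw [hmm] at hBm hq
        rw [hr1, hs1]
        have hDK1 : D / K1 ≤ 1 := by rw [div_le_one hK10]; linarith
        have hexp : 3 * (1 - 1 / K1) * D * (1 * 1) = 3 * D - 3 * (D / K1) := by ring
        rw [hexp]
        have h2 : B ≤ D - δ := by nlinarith [hBm]
        linarith
      · -- r = 1, 2 ≤ s
        have hδz : δ = 0 := by
          rcases hδ with h | h
          · exact h
          · exact absurd (hδsame h) (by rw [hr1]; intro hh; linarith)
        have hmm : m = 1 := by rw [hm, hr1]; exact min_eq_left (by linarith)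
        rw [hmm, hδz] at hBm hq
        rw [hr1]
        have hBD : B ≤ D := by nlinarith [hBm]
        have hD1 : 1 ≤ D := by linarith
        have he1 : e ≤ 1 := by rw [hr1] at hes; linarith
        have hE : e * (s - 2) + d * (1 - 2) + B + 2 * β - 1 ≤ s - 2 + D := by
          have h1 : e * (s - 2) ≤ 1 * (s - 2) :=
            mul_le_mul_of_nonneg_right he1 (by linarith)
          linarith
        have hfinal : s - 2 + D ≤ 3 * D * (s - 1) := by
          have w1 : 0 ≤ (D - 1) * (s - 2) := mul_nonneg (by linarith) (by linarith)
          have w2 : 0 ≤ D * (s - 1) := mul_nonneg hD0 (by linarith)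
          nlinarith [w1, w2]
        have hY : 3 * D * (s - 1) = 3 * D * (1 * s) - 3 * (D * 1) := by ring
        have := hYred
        rw [hmm, hr1] at this
        linarith
    · rcases hs12 with hs1 | hs2
      · -- s = 1, 2 ≤ r
        have hδz : δ = 0 := by
          rcases hδ with h | h
          · exact h
          · exact absurd (hδsame h) (by rw [hs1]; intro hh; linarith)
        have hmm : m = 1 := by rw [hm, hs1]; exact min_eq_right (by linarith)
        rw [hmm, hδz] at hBm hq
        rw [hs1]
        have hBD : B ≤ D := by nlinarith [hBm]
        have hD1 : 1 ≤ D := by linarith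
        have hd1 : d ≤ 1 := by rw [hs1] at hds; linarith
        have hE : e * (1 - 2) + d * (r - 2) + B + 2 * β - 1 ≤ r - 2 + D := by
          have h1 : d * (r - 2) ≤ 1 * (r - 2) :=
            mul_le_mul_of_nonneg_right hd1 (by linarith)
          linarith
        have hfinal : r - 2 + D ≤ 3 * D * (r - 1) := by
          have w1 : 0 ≤ (D - 1) * (r - 2) := mul_nonneg (by linarith) (by linarith)
          have w2 : 0 ≤ D * (r - 1) := mul_nonneg hD0 (by linarith)
          nlinarith [w1, w2]
        have := hYred
        rw [hmm, hs1] at this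
        linarith
      · -- 2 ≤ r, 2 ≤ s : main case
        have hDm1 : 1 ≤ D * m := by linarith
        have h3 : B ≤ m * (D * m) := by
          calc B ≤ m * (D * m - δ) := hBm
            _ ≤ m * (D * m) := mul_le_mul_of_nonneg_left (by linarith) hm0
        have hE : e * (s - 2) + d * (r - 2) + B + 2 * β - 1
            ≤ D * m * (s - 2) + D * m * (r - 2) + m * (D * m) + D * m := by
          have h1 : e * (s - 2) ≤ (D * m) * (s - 2) := by
            apply mul_le_mul_of_nonneg_right (by linarith) (by linarith)
          have h2 : d * (r - 2) ≤ (D * m) * (r - 2) := by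
            apply mul_le_mul_of_nonneg_right (by linarith) (by linarith)
          linarith
        have hkey : m * (r + s + m) ≤ 3 * (r * s) := by
          have k1 : m * r ≤ s * r := mul_le_mul_of_nonneg_right hms (le_of_lt hr0)
          have k2 : m * s ≤ r * s := mul_le_mul_of_nonneg_right hmr (le_of_lt hs0)
          have k3 : m * m ≤ r * s := by
            calc m * m ≤ r * m := mul_le_mul_of_nonneg_right hmr hm0
              _ ≤ r * s := mul_le_mul_of_nonneg_left hms (le_of_lt hr0)
          nlinarith [k1, k2, k3]
        have hfinal : D * m * (s - 2) + D * m * (r - 2) + m * (D * m) + D * m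
            ≤ 3 * D * (r * s) - 3 * (D * m) := by
          have hh : D * (m * (r + s + m)) ≤ D * (3 * (r * s)) :=
            mul_le_mul_of_nonneg_left hkey hD0
          nlinarith [hh]
        linarith

set_option maxHeartbeats 4000000 in
/-- `‖P_T(P_{Γ⊥}(N))‖_∞ ≤ α ‖N‖_∞` for `N ∈ T`,
with `α = 3(1 - 1/K_1) D_max + 1/K_p²`. -/
theorem PT_PGammaPerp_linf_bound
    {n p : ℕ} (hn : 1 ≤ n) (hp : 0 < p)
    (Obs : Set (Fin n × Fin n))
    (hObsDiag : ∀ i : Fin n, (i, i) ∈ Obs)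
    (hObsSym : ∀ i j : Fin n, (i, j) ∈ Obs → (j, i) ∈ Obs)
    (A : Matrix (Fin n) (Fin n) ℝ)
    (hA01 : ∀ i j : Fin n, (i, j) ∈ Obs → A i j = 0 ∨ A i j = 1)
    (hAsym : Aᵀ = A) (hAdiag : ∀ i, A i i = 0)
    (c : Fin n → Fin p) (hc : Function.Surjective c)
    (hmono : Antitone (clusterSize c))
    (N : Matrix (Fin n) (Fin n) ℝ) (hN : N ∈ Tspace (Umat c)) :
    linfNorm (PT (Umat c) (zeroOn (GammaSet Obs A c) N)) ≤
      (3 * (1 - 1 / (clusterSize c ⟨0, hp⟩ : ℝ)) * Dmax Obs A c +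
          1 / (clusterSize c ⟨p - 1, Nat.sub_lt hp Nat.one_pos⟩ : ℝ) ^ 2) *
        linfNorm N := by
  classical
  have hK1 : (1:ℝ) ≤ (clusterSize c ⟨0, hp⟩ : ℝ) := by
    exact_mod_cast one_le_clusterSize c hc _
  have hKp1 : (1:ℝ) ≤ (clusterSize c ⟨p - 1, Nat.sub_lt hp Nat.one_pos⟩ : ℝ) := by
    exact_mod_cast one_le_clusterSize c hc _
  have hD0 : 0 ≤ Dmax Obs A c := Dmax_nonneg Obs A c hn
  have hα0 : 0 ≤ 3 * (1 - 1 / (clusterSize c ⟨0, hp⟩ : ℝ)) * Dmax Obs A c +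
      1 / (clusterSize c ⟨p - 1, Nat.sub_lt hp Nat.one_pos⟩ : ℝ) ^ 2 := by
    have h1 : 1 / (clusterSize c ⟨0, hp⟩ : ℝ) ≤ 1 := by
      rw [div_le_one (by linarith)]; linarith
    have h2 : 0 ≤ 3 * (1 - 1 / (clusterSize c ⟨0, hp⟩ : ℝ)) * Dmax Obs A c :=
      mul_nonneg (by linarith) hD0
    have h3 : (0:ℝ) < 1 / (clusterSize c ⟨p - 1, Nat.sub_lt hp Nat.one_pos⟩ : ℝ) ^ 2 := by
      positivity
    linarith
  have hbddN : BddAbove (Set.range fun q : Fin n × Fin n => |N q.1 q.2|) :=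
    (Set.finite_range _).bddAbove
  have habsN : ∀ l m : Fin n, |N l m| ≤ linfNorm N := fun l m =>
    le_csSup hbddN (Set.mem_range_self (f := fun q : Fin n × Fin n => |N q.1 q.2|) (l, m))
  have hε0 : 0 ≤ linfNorm N :=
    le_trans (abs_nonneg _) (habsN ⟨0, hn⟩ ⟨0, hn⟩)
  have key : ∀ i j : Fin n, |PT (Umat c) (zeroOn (GammaSet Obs A c) N) i j| ≤
      (3 * (1 - 1 / (clusterSize c ⟨0, hp⟩ : ℝ)) * Dmax Obs A c +
          1 / (clusterSize c ⟨p - 1, Nat.sub_lt hp Nat.one_pos⟩ : ℝ) ^ 2) * linfNorm N := by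
    intro i j
    set K1r : ℝ := (clusterSize c ⟨0, hp⟩ : ℝ) with hK1r
    set Kpr : ℝ := (clusterSize c ⟨p - 1, Nat.sub_lt hp Nat.one_pos⟩ : ℝ) with hKpr
    set D : ℝ := Dmax Obs A c with hDdef
    set ε : ℝ := linfNorm N with hεdef
    set Γ : Set (Fin n × Fin n) := GammaSet Obs A c with hΓdef
    set G : Matrix (Fin n) (Fin n) ℝ := zeroOn Γ N with hGdef
    set Pm : Matrix (Fin n) (Fin n) ℝ := Umat c * (Umat c)ᵀ with hPmdef
    set rr : ℝ := (clusterSize c (c i) : ℝ) with hrrdef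
    set sr : ℝ := (clusterSize c (c j) : ℝ) with hsrdef
    set χ : Fin n → Fin n → ℝ := fun l m => if (l, m) ∈ Γ then 0 else 1 with hχdef
    have hrr1 : 1 ≤ rr := by rw [hrrdef]; exact_mod_cast one_le_clusterSize c hc _
    have hsr1 : 1 ≤ sr := by rw [hsrdef]; exact_mod_cast one_le_clusterSize c hc _
    have hrr0 : 0 < rr := by linarith
    have hsr0 : 0 < sr := by linarith
    have hχ0 : ∀ l m, 0 ≤ χ l m := by
      intro l m; rw [hχdef]; dsimp only; split <;> norm_num
    have hχ1 : ∀ l m, χ l m ≤ 1 := by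
      intro l m; rw [hχdef]; dsimp only; split <;> norm_num
    have hχdiag : ∀ l, χ l l = 0 := by
      intro l; rw [hχdef]; dsimp only
      rw [if_pos (diag_mem_Gamma Obs A c hObsDiag hAdiag l)]
    have hχsym : ∀ l m, χ l m = χ m l := by
      intro l m; rw [hχdef]; dsimp only
      by_cases h : (l, m) ∈ Γ
      · rw [if_pos h, if_pos (Gamma_symm Obs A c hObsSym hAsym l m h)]
      · rw [if_neg h, if_neg (fun hh => h (Gamma_symm Obs A c hObsSym hAsym m l hh))]
    have hGabs : ∀ l m, |G l m| ≤ χ l m * ε := by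
      intro l m
      rw [hGdef, hχdef]; dsimp only
      simp only [zeroOn, Matrix.of_apply]
      by_cases h : (l, m) ∈ Γ
      · rw [if_pos h, if_pos h, abs_zero, zero_mul]
      · rw [if_neg h, if_neg h, one_mul]; exact habsN l m
    have hPil : ∀ l, Pm i l = if c l = c i then rr⁻¹ else 0 := by
      intro l; rw [hPmdef, UUT_apply]
      by_cases h : c i = c l
      · rw [if_pos h, if_pos h.symm, hrrdef]
      · rw [if_neg h, if_neg (fun hh => h hh.symm)]
    have hPmj : ∀ m, Pm m j = if c m = c j then sr⁻¹ else 0 := by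
      intro m; rw [hPmdef, UUT_apply]
      by_cases h : c m = c j
      · rw [if_pos h, if_pos h, h, hsrdef]
      · rw [if_neg h, if_neg h]
    -- the coefficient of G l m in (PT G) i j
    set coef : Fin n → Fin n → ℝ := fun l m =>
      (if m = j then Pm i l else 0) + (if l = i then Pm m j else 0) - Pm i l * Pm m j
      with hcoefdef
    have hPT : PT (Umat c) G i j = ∑ l, ∑ m, coef l m * G l m := by
      have h1 : ∑ l, ∑ m, (if m = j then Pm i l else 0) * G l m = (Pm * G) i j := by
        rw [Matrix.mul_apply]
        apply Finset.sum_congr rfl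
        intro l _
        rw [Finset.sum_eq_single j]
        · rw [if_pos rfl]
        · intro b _ hb; rw [if_neg hb, zero_mul]
        · intro h; exact absurd (Finset.mem_univ _) h
      have h2 : ∑ l, ∑ m, (if l = i then Pm m j else 0) * G l m = (G * Pm) i j := by
        rw [Matrix.mul_apply, Finset.sum_eq_single i]
        · apply Finset.sum_congr rfl; intro m _; rw [if_pos rfl, mul_comm]
        · intro b _ hb
          apply Finset.sum_eq_zero; intro m _; rw [if_neg hb, zero_mul]
        · intro h; exact absurd (Finset.mem_univ _) h
      have h3 : ∑ l, ∑ m, (Pm i l * Pm m j) * G l m = (Pm * G * Pm) i j := by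
        rw [Matrix.mul_apply, Finset.sum_comm]
        apply Finset.sum_congr rfl
        intro m _
        rw [Matrix.mul_apply, Finset.sum_mul]
        apply Finset.sum_congr rfl
        intro l _
        ring
      have h4 : PT (Umat c) G i j = (Pm * G) i j + (G * Pm) i j - (Pm * G * Pm) i j := by
        rw [PT]
        simp [Matrix.sub_apply, Matrix.add_apply]
        rfl
      rw [h4, ← h1, ← h2, ← h3, hcoefdef]
      simp only [add_mul, sub_mul, Finset.sum_add_distrib, Finset.sum_sub_distrib]
    have step1 : |PT (Umat c) G i j| ≤ ∑ l, ∑ m, |coef l m| * (χ l m * ε) := by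
      rw [hPT]
      refine le_trans (Finset.abs_sum_le_sum_abs _ _) ?_
      apply Finset.sum_le_sum; intro l _
      refine le_trans (Finset.abs_sum_le_sum_abs _ _) ?_
      apply Finset.sum_le_sum; intro m _
      rw [abs_mul]
      exact mul_le_mul_of_nonneg_left (hGabs l m) (abs_nonneg _)
    -- the weight functions
    set w1 : Fin n → Fin n → ℝ := fun l m =>
      if c l = c i ∧ c m = c j then χ l m * (1 / (rr * sr)) else 0 with hw1def
    set w2 : Fin n → Fin n → ℝ := fun l m =>
      if c l = c i ∧ m = j then χ l m * ((sr - 2) / (rr * sr)) else 0 with hw2def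
    set w3 : Fin n → Fin n → ℝ := fun l m =>
      if l = i ∧ c m = c j then χ l m * ((rr - 2) / (rr * sr)) else 0 with hw3def
    set w4 : Fin n → Fin n → ℝ := fun l m =>
      if l = i ∧ m = j then χ l m * (2 / (rr * sr)) else 0 with hw4def
    have hweight : ∀ l m, |coef l m| * (χ l m * ε)
        ≤ ε * (w1 l m + w2 l m + w3 l m + w4 l m) := by
      have hrinv : (0:ℝ) < rr⁻¹ := inv_pos.mpr hrr0
      have hsinv : (0:ℝ) < sr⁻¹ := inv_pos.mpr hsr0
      have hrle : rr⁻¹ ≤ 1 := by rw [← one_div, div_le_one hrr0]; exact hrr1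
      have hsle : sr⁻¹ ≤ 1 := by rw [← one_div, div_le_one hsr0]; exact hsr1
      intro l m
      have hχv : χ l m = 0 ∨ χ l m = 1 := by
        rw [hχdef]; dsimp only; split <;> simp
      rcases hχv with h0 | h1
      · simp [hw1def, hw2def, hw3def, hw4def, h0]
      · rw [h1, one_mul, mul_comm]
        apply mul_le_mul_of_nonneg_left ?_ hε0
        simp only [hcoefdef, hw1def, hw2def, hw3def, hw4def, hPil, hPmj, h1, one_mul]
        by_cases hli : c l = c i
        · by_cases hmj : c m = c j
          · by_cases hl : l = i
            · by_cases hm : m = j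
              · rw [if_pos hm, if_pos hli, if_pos hl, if_pos hmj,
                  if_pos (show c l = c i ∧ c m = c j from ⟨hli, hmj⟩),
                  if_pos (show c l = c i ∧ m = j from ⟨hli, hm⟩),
                  if_pos (show l = i ∧ c m = c j from ⟨hl, hmj⟩),
                  if_pos (show l = i ∧ m = j from ⟨hl, hm⟩)]
                rw [abs_of_nonneg (by
                  linarith [mul_nonneg hrinv.le (by linarith : (0:ℝ) ≤ 1 - sr⁻¹)])]
                apply le_of_eq
                field_simp
                ring
              · rw [if_neg hm, if_pos hli, if_pos hl, if_pos hmj,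
                  if_pos (show c l = c i ∧ c m = c j from ⟨hli, hmj⟩),
                  if_neg (fun hh : c l = c i ∧ m = j => hm hh.2),
                  if_pos (show l = i ∧ c m = c j from ⟨hl, hmj⟩),
                  if_neg (fun hh : l = i ∧ m = j => hm hh.2)]
                rw [zero_add, add_zero, add_zero]
                rw [abs_of_nonneg (by
                  linarith [mul_nonneg hsinv.le (by linarith : (0:ℝ) ≤ 1 - rr⁻¹)])]
                apply le_of_eq
                field_simp
                ring
            · by_cases hm : m = j
              · rw [if_pos hm, if_pos hli, if_neg hl, if_pos hmj,
                  if_pos (show c l = c i ∧ c m = c j from ⟨hli, hmj⟩),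
                  if_pos (show c l = c i ∧ m = j from ⟨hli, hm⟩),
                  if_neg (fun hh : l = i ∧ c m = c j => hl hh.1),
                  if_neg (fun hh : l = i ∧ m = j => hl hh.1)]
                rw [add_zero, add_zero, add_zero]
                rw [abs_of_nonneg (by
                  linarith [mul_nonneg hrinv.le (by linarith : (0:ℝ) ≤ 1 - sr⁻¹)])]
                apply le_of_eq
                field_simp
                ring
              · rw [if_neg hm, if_neg hl, if_pos hli, if_pos hmj,
                  if_pos (show c l = c i ∧ c m = c j from ⟨hli, hmj⟩),
                  if_neg (fun hh : c l = c i ∧ m = j => hm hh.2),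
                  if_neg (fun hh : l = i ∧ c m = c j => hl hh.1),
                  if_neg (fun hh : l = i ∧ m = j => hl hh.1)]
                rw [zero_add, zero_sub, abs_neg, add_zero, add_zero, add_zero]
                rw [abs_of_nonneg (by positivity)]
                apply le_of_eq
                field_simp
          · have hm : ¬ m = j := fun hh => hmj (by rw [hh])
            rw [if_neg hm, if_neg hmj,
              if_neg (fun hh : c l = c i ∧ c m = c j => hmj hh.2),
              if_neg (fun hh : c l = c i ∧ m = j => hm hh.2),
              if_neg (fun hh : l = i ∧ c m = c j => hmj hh.2),
              if_neg (fun hh : l = i ∧ m = j => hm hh.2)]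
            simp
        · have hl : ¬ l = i := fun hh => hli (by rw [hh])
          rw [if_neg hl, if_neg hli,
            if_neg (fun hh : c l = c i ∧ c m = c j => hli hh.1),
            if_neg (fun hh : c l = c i ∧ m = j => hli hh.1),
            if_neg (fun hh : l = i ∧ c m = c j => hl hh.1),
            if_neg (fun hh : l = i ∧ m = j => hl hh.1)]
          simp
    have step2 : |PT (Umat c) G i j| ≤
        ε * ((∑ l, ∑ m, w1 l m) + (∑ l, ∑ m, w2 l m) + (∑ l, ∑ m, w3 l m)
          + (∑ l, ∑ m, w4 l m)) := by
      refine le_trans step1 ?_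
      calc ∑ l, ∑ m, |coef l m| * (χ l m * ε)
          ≤ ∑ l, ∑ m, ε * (w1 l m + w2 l m + w3 l m + w4 l m) := by
            apply Finset.sum_le_sum; intro l _
            apply Finset.sum_le_sum; intro m _
            exact hweight l m
        _ = ε * ((∑ l, ∑ m, w1 l m) + (∑ l, ∑ m, w2 l m) + (∑ l, ∑ m, w3 l m)
            + (∑ l, ∑ m, w4 l m)) := by
            simp only [Finset.mul_sum, Finset.sum_add_distrib, mul_add]
    -- the counting quantities
    set rowsum : Fin n → ℝ := fun l => ∑ m, if c m = c j then χ l m else 0 with hrowsumdef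
    set dR : ℝ := rowsum i with hdRdef
    set eC : ℝ := ∑ l, if c l = c i then χ l j else 0 with heCdef
    set BB : ℝ := ∑ l, if c l = c i then rowsum l else 0 with hBBdef
    set βv : ℝ := χ i j with hβvdef
    set δv : ℝ := if c i = c j then (1:ℝ) else 0 with hδvdef
    have hsum1 : ∑ l, ∑ m, w1 l m = BB * (1 / (rr * sr)) := by
      rw [hBBdef, Finset.sum_mul]
      apply Finset.sum_congr rfl
      intro l _
      simp only [hw1def, hrowsumdef]
      by_cases hli : c l = c i
      · rw [if_pos hli, Finset.sum_mul]
        apply Finset.sum_congr rfl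
        intro m _
        by_cases hmj : c m = c j
        · rw [if_pos (show c l = c i ∧ c m = c j from ⟨hli, hmj⟩), if_pos hmj]
        · rw [if_neg (fun hh : c l = c i ∧ c m = c j => hmj hh.2), if_neg hmj, zero_mul]
      · rw [if_neg hli, zero_mul]
        apply Finset.sum_eq_zero
        intro m _
        rw [if_neg (fun hh : c l = c i ∧ c m = c j => hli hh.1)]
    have hsum2 : ∑ l, ∑ m, w2 l m = eC * ((sr - 2) / (rr * sr)) := by
      rw [heCdef, Finset.sum_mul]
      apply Finset.sum_congr rfl
      intro l _
      simp only [hw2def]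
      by_cases hli : c l = c i
      · rw [if_pos hli, Finset.sum_eq_single j]
        · rw [if_pos (show c l = c i ∧ j = j from ⟨hli, rfl⟩)]
        · intro b _ hb
          rw [if_neg (fun hh : c l = c i ∧ b = j => hb hh.2)]
        · intro h; exact absurd (Finset.mem_univ _) h
      · rw [if_neg hli, zero_mul]
        apply Finset.sum_eq_zero
        intro m _
        rw [if_neg (fun hh : c l = c i ∧ m = j => hli hh.1)]
    have hsum3 : ∑ l, ∑ m, w3 l m = dR * ((rr - 2) / (rr * sr)) := by
      rw [hdRdef, hrowsumdef]
      dsimp only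
      rw [Finset.sum_mul, Finset.sum_eq_single i]
      · apply Finset.sum_congr rfl
        intro m _
        simp only [hw3def]
        by_cases hmj : c m = c j
        · rw [if_pos (show True ∧ c m = c j from ⟨trivial, hmj⟩), if_pos hmj]
        · rw [if_neg (fun hh : True ∧ c m = c j => hmj hh.2), if_neg hmj, zero_mul]
      · intro b _ hb
        apply Finset.sum_eq_zero
        intro m _
        simp only [hw3def]
        rw [if_neg (fun hh : b = i ∧ c m = c j => hb hh.1)]
      · intro h; exact absurd (Finset.mem_univ _) h
    have hsum4 : ∑ l, ∑ m, w4 l m = βv * (2 / (rr * sr)) := by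
      rw [hβvdef, Finset.sum_eq_single i]
      · rw [Finset.sum_eq_single j]
        · simp only [hw4def]
          rw [if_pos (show True ∧ True from ⟨trivial, trivial⟩)]
        · intro b _ hb
          simp only [hw4def]
          rw [if_neg (fun hh : True ∧ b = j => hb hh.2)]
        · intro h; exact absurd (Finset.mem_univ _) h
      · intro b _ hb
        apply Finset.sum_eq_zero
        intro m _
        simp only [hw4def]
        rw [if_neg (fun hh : b = i ∧ m = j => hb hh.1)]
      · intro h; exact absurd (Finset.mem_univ _) h
    have hC : (eC * (sr - 2) + dR * (rr - 2) + BB + 2 * βv) / (rr * sr) ≤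
        3 * (1 - 1 / K1r) * D + 1 / Kpr ^ 2 := by
      have hrowsum0 : ∀ l, 0 ≤ rowsum l := by
        intro l
        rw [hrowsumdef]
        apply Finset.sum_nonneg
        intro m _
        by_cases h : c m = c j
        · rw [if_pos h]; exact hχ0 l m
        · rw [if_neg h]
      have hmonoK1 : ∀ k : Fin p, (clusterSize c k : ℝ) ≤ K1r := by
        intro k
        rw [hK1r]
        exact_mod_cast hmono (show (⟨0, hp⟩ : Fin p) ≤ k from by simp [Fin.le_def])
      have hmonoKp : ∀ k : Fin p, Kpr ≤ (clusterSize c k : ℝ) := by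
        intro k
        rw [hKpr]
        refine Nat.cast_le.mpr (hmono (show k ≤ (⟨p - 1, Nat.sub_lt hp Nat.one_pos⟩ : Fin p)
          from by rw [Fin.le_def]; exact Nat.le_sub_one_of_lt k.isLt))
      -- row bound via dval
      have hrow : ∀ l, c l = c i → rowsum l + δv ≤ D * min rr sr := by
        intro l hl
        have h1 := row_le_dval Obs A c hObsDiag hA01 hAdiag l (c j)
        have h2 := dval_le_Dmax Obs A c hc l (c j)
        rw [← hDdef] at h2
        rw [hl] at h2
        rw [← hrrdef, ← hsrdef, min_comm] at h2
        have hrs : rowsum l = ∑ m, if c m = c j then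
            (if (l, m) ∈ GammaSet Obs A c then (0:ℝ) else 1) else 0 := by
          rw [hrowsumdef]
        have hδeq : (if c l = c j then (1:ℝ) else 0) = δv := by
          rw [hδvdef, hl]
        rw [← hrs, hδeq] at h1
        linarith
      -- column bound via dval (uses symmetry)
      have hcol : ∀ m, c m = c j → (∑ l, if c l = c i then χ l m else 0) + δv
          ≤ D * min rr sr := by
        intro m hm
        have h1 := row_le_dval Obs A c hObsDiag hA01 hAdiag m (c i)
        have h2 := dval_le_Dmax Obs A c hc m (c i)
        rw [← hDdef] at h2
        rw [hm] at h2
        rw [← hrrdef, ← hsrdef] at h2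
        have hrs : (∑ l, if c l = c i then χ l m else 0) = ∑ l, if c l = c i then
            (if (m, l) ∈ GammaSet Obs A c then (0:ℝ) else 1) else 0 := by
          apply Finset.sum_congr rfl
          intro l _
          by_cases h : c l = c i
          · rw [if_pos h, if_pos h, hχsym l m, hχdef, hΓdef]
          · rw [if_neg h, if_neg h]
        have hδeq : (if c m = c i then (1:ℝ) else 0) = δv := by
          rw [hδvdef, hm]
          by_cases h : c i = c j
          · rw [if_pos h.symm, if_pos h]
          · rw [if_neg (fun hh => h hh.symm), if_neg h]
        rw [← hrs, hδeq] at h1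
        linarith
      -- all master hypotheses
      have hrK : rr ≤ K1r := by rw [hrrdef]; exact hmonoK1 (c i)
      have hsK : sr ≤ K1r := by rw [hsrdef]; exact hmonoK1 (c j)
      have hKprr : Kpr ≤ rr := by rw [hrrdef]; exact hmonoKp (c i)
      have hKpsr : Kpr ≤ sr := by rw [hsrdef]; exact hmonoKp (c j)
      have hDK : D ≤ K1r := by
        rw [hDdef, hK1r]; exact Dmax_le_K1 Obs A c hp hc hmono
      have hβ0' : 0 ≤ βv := hχ0 i j
      have hβ1' : βv ≤ 1 := hχ1 i j
      have hβd : βv ≤ dR := by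
        rw [hdRdef, hrowsumdef, hβvdef]
        have h1 := Finset.single_le_sum (f := fun m => if c m = c j then χ i m else 0)
          (fun m _ => by by_cases h : c m = c j
                         · rw [if_pos h]; exact hχ0 i m
                         · rw [if_neg h]) (Finset.mem_univ j)
        simpa using h1
      have hβe : βv ≤ eC := by
        rw [heCdef, hβvdef]
        have h1 := Finset.single_le_sum (f := fun l => if c l = c i then χ l j else 0)
          (fun l _ => by by_cases h : c l = c i
                         · rw [if_pos h]; exact hχ0 l j
                         · rw [if_neg h]) (Finset.mem_univ i)
        simpa using h1
      have hdq : dR + δv ≤ D * min rr sr := by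
        rw [hdRdef]; exact hrow i rfl
      have heq : eC + δv ≤ D * min rr sr := by
        rw [heCdef]; exact hcol j rfl
      have hds : dR + δv ≤ sr := by
        have key2 : ∀ m, (if c m = c j then χ i m else 0)
            + (if m = i ∧ c i = c j then (1:ℝ) else 0) ≤ (if c m = c j then (1:ℝ) else 0) := by
          intro m
          by_cases hmj : c m = c j
          · rw [if_pos hmj, if_pos hmj]
            by_cases hmi : m = i
            · have hij : c i = c j := by rw [← hmi]; exact hmj
              rw [if_pos (show m = i ∧ c i = c j from ⟨hmi, hij⟩), hmi, hχdiag]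
              norm_num
            · rw [if_neg (fun hh : m = i ∧ c i = c j => hmi hh.1), add_zero]
              exact hχ1 i m
          · rw [if_neg hmj, if_neg hmj, zero_add,
              if_neg (fun hh : m = i ∧ c i = c j => hmj (by rw [hh.1, hh.2]))]
        have hdRsum : dR = ∑ m, (if c m = c j then χ i m else 0) := hdRdef
        have hδsum : δv = ∑ m, (if m = i ∧ c i = c j then (1:ℝ) else 0) := by
          rw [hδvdef, Finset.sum_eq_single i]
          · by_cases h : c i = c j
            · rw [if_pos h, if_pos (show i = i ∧ c i = c j from ⟨rfl, h⟩)]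
            · rw [if_neg h, if_neg (fun hh : i = i ∧ c i = c j => h hh.2)]
          · intro b _ hb
            rw [if_neg (fun hh : b = i ∧ c i = c j => hb hh.1)]
          · intro h; exact absurd (Finset.mem_univ _) h
        have hsplit : dR + δv = ∑ m, ((if c m = c j then χ i m else 0)
            + (if m = i ∧ c i = c j then (1:ℝ) else 0)) := by
          rw [hdRsum, hδsum, ← Finset.sum_add_distrib]
        rw [hsplit]
        calc ∑ m, ((if c m = c j then χ i m else 0)
            + (if m = i ∧ c i = c j then (1:ℝ) else 0))
            ≤ ∑ m, (if c m = c j then (1:ℝ) else 0) := Finset.sum_le_sum fun m _ => key2 m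
          _ = sr := by rw [hsrdef, clusterSize_sum]
      have hes : eC + δv ≤ rr := by
        have key2 : ∀ l, (if c l = c i then χ l j else 0)
            + (if l = j ∧ c i = c j then (1:ℝ) else 0) ≤ (if c l = c i then (1:ℝ) else 0) := by
          intro l
          by_cases hli : c l = c i
          · rw [if_pos hli, if_pos hli]
            by_cases hlj : l = j
            · have hij : c i = c j := by rw [← hli, hlj]
              rw [if_pos (show l = j ∧ c i = c j from ⟨hlj, hij⟩), hlj, hχdiag]
              norm_num
            · rw [if_neg (fun hh : l = j ∧ c i = c j => hlj hh.1), add_zero]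
              exact hχ1 l j
          · rw [if_neg hli, if_neg hli, zero_add,
              if_neg (fun hh : l = j ∧ c i = c j => hli (by rw [hh.1, ← hh.2]))]
        have heCsum : eC = ∑ l, (if c l = c i then χ l j else 0) := heCdef
        have hδsum : δv = ∑ l, (if l = j ∧ c i = c j then (1:ℝ) else 0) := by
          rw [hδvdef, Finset.sum_eq_single j]
          · by_cases h : c i = c j
            · rw [if_pos h, if_pos (show j = j ∧ c i = c j from ⟨rfl, h⟩)]
            · rw [if_neg h, if_neg (fun hh : j = j ∧ c i = c j => h hh.2)]
          · intro b _ hb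
            rw [if_neg (fun hh : b = j ∧ c i = c j => hb hh.1)]
          · intro h; exact absurd (Finset.mem_univ _) h
        have hsplit : eC + δv = ∑ l, ((if c l = c i then χ l j else 0)
            + (if l = j ∧ c i = c j then (1:ℝ) else 0)) := by
          rw [heCsum, hδsum, ← Finset.sum_add_distrib]
        rw [hsplit]
        calc ∑ l, ((if c l = c i then χ l j else 0)
            + (if l = j ∧ c i = c j then (1:ℝ) else 0))
            ≤ ∑ l, (if c l = c i then (1:ℝ) else 0) := Finset.sum_le_sum fun l _ => key2 l
          _ = rr := by rw [hrrdef, clusterSize_sum]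
      have hBde : dR + eC - βv ≤ BB := by
        have hBBsplit : BB = rowsum i + ∑ l ∈ Finset.univ.erase i,
            (if c l = c i then rowsum l else 0) := by
          rw [hBBdef, ← Finset.add_sum_erase _ _ (Finset.mem_univ i), if_pos rfl]
        have heCsplit : eC = χ i j + ∑ l ∈ Finset.univ.erase i,
            (if c l = c i then χ l j else 0) := by
          rw [heCdef, ← Finset.add_sum_erase _ _ (Finset.mem_univ i), if_pos rfl]
        have hterm : ∀ l ∈ Finset.univ.erase i,
            (if c l = c i then χ l j else 0) ≤ (if c l = c i then rowsum l else 0) := by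
          intro l _
          by_cases hli : c l = c i
          · rw [if_pos hli, if_pos hli, hrowsumdef]
            have h1 := Finset.single_le_sum (f := fun m => if c m = c j then χ l m else 0)
              (fun m _ => by by_cases h : c m = c j
                             · rw [if_pos h]; exact hχ0 l m
                             · rw [if_neg h]) (Finset.mem_univ j)
            rw [if_pos rfl] at h1
            exact h1
          · rw [if_neg hli, if_neg hli]
        have hsum := Finset.sum_le_sum hterm
        rw [hBBsplit, heCsplit, hdRdef, hβvdef]
        linarith
      have hBm : BB ≤ min rr sr * (D * min rr sr - δv) := by
        have hBB0 : 0 ≤ BB := by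
          rw [hBBdef]
          apply Finset.sum_nonneg
          intro l _
          by_cases h : c l = c i
          · rw [if_pos h]; exact hrowsum0 l
          · rw [if_neg h]
        have hrowbd : BB ≤ rr * (D * min rr sr - δv) := by
          calc BB ≤ ∑ l, (if c l = c i then D * min rr sr - δv else 0) := by
                rw [hBBdef]
                apply Finset.sum_le_sum
                intro l _
                by_cases hli : c l = c i
                · rw [if_pos hli, if_pos hli]
                  have := hrow l hli
                  linarith
                · rw [if_neg hli, if_neg hli]
            _ = (∑ l, if c l = c i then (1:ℝ) else 0) * (D * min rr sr - δv) := by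
                rw [Finset.sum_mul]
                apply Finset.sum_congr rfl
                intro l _
                by_cases hli : c l = c i
                · rw [if_pos hli, if_pos hli, one_mul]
                · rw [if_neg hli, if_neg hli, zero_mul]
            _ = rr * (D * min rr sr - δv) := by rw [hrrdef, clusterSize_sum]
        have hswap : BB = ∑ m, (if c m = c j then (∑ l, if c l = c i then χ l m else 0)
            else 0) := by
          rw [hBBdef]
          calc ∑ l, (if c l = c i then rowsum l else 0)
              = ∑ l, ∑ m, (if c l = c i then (if c m = c j then χ l m else 0) else 0) := by
                apply Finset.sum_congr rfl
                intro l _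
                by_cases hli : c l = c i
                · rw [if_pos hli, hrowsumdef]
                  apply Finset.sum_congr rfl
                  intro m _
                  rw [if_pos hli]
                · rw [if_neg hli]
                  rw [Finset.sum_congr rfl (fun m _ => if_neg hli), Finset.sum_const_zero]
            _ = ∑ m, ∑ l, (if c l = c i then (if c m = c j then χ l m else 0) else 0) :=
                Finset.sum_comm
            _ = ∑ m, (if c m = c j then (∑ l, if c l = c i then χ l m else 0) else 0) := by
                apply Finset.sum_congr rfl
                intro m _
                by_cases hmj : c m = c j
                · rw [if_pos hmj]
                  apply Finset.sum_congr rfl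
                  intro l _
                  by_cases hli : c l = c i
                  · rw [if_pos hli, if_pos hli, if_pos hmj]
                  · rw [if_neg hli, if_neg hli]
                · rw [if_neg hmj]
                  rw [Finset.sum_eq_zero]
                  intro l _
                  by_cases hli : c l = c i
                  · rw [if_pos hli, if_neg hmj]
                  · rw [if_neg hli]
        have hcolbd : BB ≤ sr * (D * min rr sr - δv) := by
          rw [hswap]
          calc ∑ m, (if c m = c j then (∑ l, if c l = c i then χ l m else 0) else 0)
              ≤ ∑ m, (if c m = c j then D * min rr sr - δv else 0) := by
                apply Finset.sum_le_sum
                intro m _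
                by_cases hmj : c m = c j
                · rw [if_pos hmj, if_pos hmj]
                  have := hcol m hmj
                  linarith
                · rw [if_neg hmj, if_neg hmj]
            _ = (∑ m, if c m = c j then (1:ℝ) else 0) * (D * min rr sr - δv) := by
                rw [Finset.sum_mul]
                apply Finset.sum_congr rfl
                intro m _
                by_cases hmj : c m = c j
                · rw [if_pos hmj, if_pos hmj, one_mul]
                · rw [if_neg hmj, if_neg hmj, zero_mul]
            _ = sr * (D * min rr sr - δv) := by rw [hsrdef, clusterSize_sum]
        have hX0 : 0 ≤ D * min rr sr - δv := by
          by_contra hneg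
          push_neg at hneg
          have : rr * (D * min rr sr - δv) < 0 := mul_neg_of_pos_of_neg hrr0 hneg
          linarith
        rw [min_mul_of_nonneg _ _ hX0]
        exact le_min hrowbd hcolbd
      have hδor : δv = 0 ∨ δv = 1 := by
        rw [hδvdef]
        by_cases h : c i = c j
        · right; rw [if_pos h]
        · left; rw [if_neg h]
      have hδsame : δv = 1 → rr = sr := by
        intro h
        have hij : c i = c j := by
          by_contra hh
          rw [hδvdef, if_neg hh] at h
          norm_num at h
        rw [hrrdef, hsrdef, hij]
      have hr12 : rr = 1 ∨ 2 ≤ rr := by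
        have h1 := one_le_clusterSize c hc (c i)
        rcases Nat.lt_or_ge (clusterSize c (c i)) 2 with h | h
        · left
          rw [hrrdef]
          have : clusterSize c (c i) = 1 := by omega
          rw [this]; norm_num
        · right; rw [hrrdef]; exact_mod_cast h
      have hs12 : sr = 1 ∨ 2 ≤ sr := by
        have h1 := one_le_clusterSize c hc (c j)
        rcases Nat.lt_or_ge (clusterSize c (c j)) 2 with h | h
        · left
          rw [hsrdef]
          have : clusterSize c (c j) = 1 := by omega
          rw [this]; norm_num
        · right; rw [hsrdef]; exact_mod_cast h
      -- existence dichotomy for BB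
      have hdich : (BB = 0 ∨ 1 ≤ BB) ∧ (1 ≤ BB → 1 + δv ≤ D * min rr sr) := by
        by_cases hex : ∃ l m', c l = c i ∧ c m' = c j ∧ χ l m' ≠ 0
        · obtain ⟨l, m', hl, hm', hχne⟩ := hex
          have hχ1' : χ l m' = 1 := by
            rw [hχdef] at hχne ⊢
            dsimp only at hχne ⊢
            by_cases h : (l, m') ∈ Γ
            · rw [if_pos h] at hχne; exact absurd rfl hχne
            · rw [if_neg h]
          have hrow1 : 1 ≤ rowsum l := by
            rw [hrowsumdef]
            have h1 := Finset.single_le_sum (f := fun m => if c m = c j then χ l m else 0)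
              (fun m _ => by by_cases h : c m = c j
                             · rw [if_pos h]; exact hχ0 l m
                             · rw [if_neg h]) (Finset.mem_univ m')
            rw [if_pos hm', hχ1'] at h1
            exact h1
          have hBB1 : 1 ≤ BB := by
            rw [hBBdef]
            have h2 := Finset.single_le_sum
              (f := fun l' => if c l' = c i then rowsum l' else 0)
              (fun l' _ => by by_cases h : c l' = c i
                              · rw [if_pos h]; exact hrowsum0 l'
                              · rw [if_neg h]) (Finset.mem_univ l)
            rw [if_pos hl] at h2
            linarith
          have hq1 : 1 + δv ≤ D * min rr sr := by
            have := hrow l hl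
            linarith
          exact ⟨Or.inr hBB1, fun _ => hq1⟩
        · push_neg at hex
          have hBB0' : BB = 0 := by
            rw [hBBdef]
            apply Finset.sum_eq_zero
            intro l _
            by_cases hli : c l = c i
            · rw [if_pos hli, hrowsumdef]
              apply Finset.sum_eq_zero
              intro m' _
              by_cases hmj : c m' = c j
              · rw [if_pos hmj]
                exact hex l m' hli hmj
              · rw [if_neg hmj]
            · rw [if_neg hli]
          refine ⟨Or.inl hBB0', fun h => ?_⟩
          rw [hBB0'] at h
          norm_num at h
      exact master_ineq rr sr (min rr sr) K1r Kpr D dR eC BB βv δv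
        hrr1 hsr1 rfl hrK hsK hKp1 hKprr hKpsr hD0 hDK hβ0' hβ1' hβd hβe
        hdq heq hds hes hBde hBm hδor hδsame hdich.2 hdich.1 hr12 hs12
    have step3 : |PT (Umat c) G i j| ≤
        ε * ((eC * (sr - 2) + dR * (rr - 2) + BB + 2 * βv) / (rr * sr)) := by
      refine le_trans step2 ?_
      apply mul_le_mul_of_nonneg_left ?_ hε0
      rw [hsum1, hsum2, hsum3, hsum4]
      apply le_of_eq
      field_simp
      ring
    calc |PT (Umat c) G i j|
        ≤ ε * ((eC * (sr - 2) + dR * (rr - 2) + BB + 2 * βv) / (rr * sr)) := step3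
      _ ≤ ε * (3 * (1 - 1 / K1r) * D + 1 / Kpr ^ 2) :=
          mul_le_mul_of_nonneg_left hC hε0
      _ = (3 * (1 - 1 / K1r) * D + 1 / Kpr ^ 2) * ε := mul_comm _ _
  rw [linfNorm]
  apply Real.sSup_le
  · rintro x ⟨q, rfl⟩
    exact key q.1 q.2
  · exact mul_nonneg hα0 hε0
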